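/- arXiv:2303.17360 — 4 statements merged into one kernel-verified Lean document; each statement's English description precedes it below -/
import Mathlib

section
/- Let a : ℝ → ℝ be a smooth positive even function, non-decreasing on [0,∞). Define q(ξ₁,ξ₂) = (ξ₁·a(ξ₁) + ξ₂·a(ξ₂))/(ξ₁+ξ₂) for ξ₁+ξ₂ ≠ 0. Then q extends to a smooth positive function on ℝ², given by q(ξ₁,ξ₂) = ∫₀¹ (d/dξ)(ξ·a(ξ)) evaluated at (-ξ₂ + (ξ₁+ξ₂)t) dt. -/
open ContDiff Set Filter
open scoped Topology ENNReal NNReal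

private lemma contDiff_paramIntegral01 (n : ℕ) : ∀ (E : Type) [NormedAddCommGroup E]
    [NormedSpace ℝ E] [CompleteSpace E] (K : ℝ × ℝ → ℝ → E),
    ContDiff ℝ ∞ (Function.uncurry K) →
    ContDiff ℝ n (fun p => ∫ t in (0:ℝ)..1, K p t) := by
  induction n with
  | zero =>
    intro E _ _ _ K hK
    exact contDiff_zero.mpr
      (intervalIntegral.continuous_parametric_intervalIntegral_of_continuous' hK.continuous 0 1)
  | succ n ih =>
    intro E _ _ _ K hK
    set K' : ℝ × ℝ → ℝ → (ℝ × ℝ) →L[ℝ] E := fun p t =>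
      (fderiv ℝ (Function.uncurry K) (p, t)).comp (ContinuousLinearMap.inl ℝ (ℝ × ℝ) ℝ)
      with hK'
    have hK'c : ContDiff ℝ ∞ (Function.uncurry K') := by
      have hd : ContDiff ℝ ∞ (fderiv ℝ (Function.uncurry K)) :=
        hK.fderiv_right (by simp)
      exact hd.clm_comp contDiff_const
    have hder : ∀ p t, HasFDerivAt (fun x => K x t) (K' p t) p := by
      intro p t
      have h1 : HasFDerivAt (Function.uncurry K) (fderiv ℝ (Function.uncurry K) (p, t)) (p, t) :=
        (hK.differentiable (by simp) (p, t)).hasFDerivAt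
      have h2 : HasFDerivAt (fun x : ℝ × ℝ => (x, t)) (ContinuousLinearMap.inl ℝ (ℝ × ℝ) ℝ) p :=
        hasFDerivAt_prodMk_left p t
      exact h1.comp p h2
    refine contDiff_succ_iff_hasFDerivAt.mpr ⟨fun p => ∫ t in (0:ℝ)..1, K' p t,
      ih _ K' hK'c, ?_⟩
    intro p₀
    obtain ⟨C, hC⟩ := ((isCompact_closedBall p₀ 1).prod (isCompact_Icc (a := (0:ℝ)) (b := 1))
      ).exists_bound_of_continuousOn hK'c.continuous.continuousOn
    refine intervalIntegral.hasFDerivAt_integral_of_dominated_of_fderiv_le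
      (bound := fun _ => C) (Metric.closedBall_mem_nhds p₀ one_pos) ?_ ?_ ?_ ?_ ?_ ?_
    · exact Eventually.of_forall fun x =>
        (hK.continuous.comp (Continuous.prodMk continuous_const continuous_id)).aestronglyMeasurable
    · exact (hK.continuous.comp (Continuous.prodMk continuous_const continuous_id)).intervalIntegrable 0 1
    · exact (hK'c.continuous.comp (Continuous.prodMk continuous_const continuous_id)).aestronglyMeasurable
    · refine Eventually.of_forall fun t ht x hx => ?_
      have ht' : t ∈ Icc (0:ℝ) 1 := by
        rw [uIoc_of_le zero_le_one] at ht; exact Ioc_subset_Icc_self ht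
      exact hC (x, t) ⟨hx, ht'⟩
    · exact intervalIntegrable_const
    · exact Eventually.of_forall fun t _ x _ => hder x t

/-- The divided difference `q(ξ₁,ξ₂) = (ξ₁a(ξ₁)+ξ₂a(ξ₂))/(ξ₁+ξ₂)` extends to a smooth positive
function on `ℝ²`, given by `∫₀¹ (ξ a(ξ))'(-ξ₂+(ξ₁+ξ₂)t) dt`. -/
theorem stmt2 (a : ℝ → ℝ) (ha_smooth : ContDiff ℝ (⊤ : ℕ∞) a) (ha_pos : ∀ ξ, 0 < a ξ)
    (ha_even : ∀ ξ, a (-ξ) = a ξ) (ha_mono : MonotoneOn a (Set.Ici 0)) :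
    let q : ℝ → ℝ → ℝ := fun ξ₁ ξ₂ =>
      ∫ t in (0:ℝ)..1, deriv (fun ξ : ℝ => ξ * a ξ) (-ξ₂ + (ξ₁ + ξ₂) * t)
    ContDiff ℝ (⊤ : ℕ∞) (fun p : ℝ × ℝ => q p.1 p.2) ∧
    (∀ ξ₁ ξ₂ : ℝ, 0 < q ξ₁ ξ₂) ∧
    (∀ ξ₁ ξ₂ : ℝ, ξ₁ + ξ₂ ≠ 0 → q ξ₁ ξ₂ = (ξ₁ * a ξ₁ + ξ₂ * a ξ₂) / (ξ₁ + ξ₂)) := by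
  intro q
  have hq : ∀ ξ₁ ξ₂ : ℝ, q ξ₁ ξ₂ =
      ∫ t in (0:ℝ)..1, deriv (fun ξ : ℝ => ξ * a ξ) (-ξ₂ + (ξ₁ + ξ₂) * t) := fun _ _ => rfl
  set F : ℝ → ℝ := fun ξ => ξ * a ξ with hFdef
  have hFc : ContDiff ℝ ∞ F := contDiff_id.mul ha_smooth
  have hFdiff : Differentiable ℝ F := hFc.differentiable (by simp)
  have hderiv_cont : Continuous (deriv F) := by
    exact (contDiff_infty_iff_deriv.mp hFc).2.continuous
  -- identity with dslope
  have hq_eq : ∀ ξ₁ ξ₂ : ℝ, q ξ₁ ξ₂ = dslope F (-ξ₂) ξ₁ := by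
    intro ξ₁ ξ₂
    by_cases h : ξ₁ + ξ₂ = 0
    · have h1 : ξ₁ = -ξ₂ := by linarith
      have h2 : q ξ₁ ξ₂ = deriv F (-ξ₂) := by
        rw [hq, h]
        simp
      rw [h2, h1, dslope_same]
    · have hne : ξ₁ ≠ -ξ₂ := by
        intro hh; exact h (by rw [hh]; ring)
      have hderivAt : ∀ t ∈ Set.uIcc (0:ℝ) 1, HasDerivAt (fun u : ℝ => F (-ξ₂ + (ξ₁ + ξ₂) * u))
          (deriv F (-ξ₂ + (ξ₁ + ξ₂) * t) * (ξ₁ + ξ₂)) t := by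
        intro t _
        have h1 : HasDerivAt (fun u : ℝ => -ξ₂ + (ξ₁ + ξ₂) * u) (ξ₁ + ξ₂) t := by
          simpa using ((hasDerivAt_id t).const_mul (ξ₁ + ξ₂)).const_add (-ξ₂)
        exact ((hFdiff _).hasDerivAt).comp t h1
      have hintg : IntervalIntegrable
          (fun t : ℝ => deriv F (-ξ₂ + (ξ₁ + ξ₂) * t) * (ξ₁ + ξ₂)) MeasureTheory.volume 0 1 :=
        ((hderiv_cont.comp (by continuity)).mul continuous_const).intervalIntegrable 0 1
      have hint := intervalIntegral.integral_eq_sub_of_hasDerivAt hderivAt hintg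
      rw [intervalIntegral.integral_mul_const] at hint
      have h2 : -ξ₂ + (ξ₁ + ξ₂) * 1 = ξ₁ := by ring
      have h3 : -ξ₂ + (ξ₁ + ξ₂) * 0 = -ξ₂ := by ring
      rw [h2, h3] at hint
      rw [hq, dslope_of_ne F hne, slope_def_field]
      rw [eq_div_iff (by intro hh; exact h (by linarith [hh] ))]
      rw [show ξ₁ - -ξ₂ = ξ₁ + ξ₂ by ring]
      exact hint
  refine ⟨?_, ?_, ?_⟩
  · -- smoothness
    have hdF : ContDiff ℝ ∞ (deriv F) := (contDiff_infty_iff_deriv.mp hFc).2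
    refine contDiff_infty.mpr fun n => contDiff_paramIntegral01 n ℝ
      (fun p t => deriv F (-p.2 + (p.1 + p.2) * t)) ?_
    exact hdF.comp (by fun_prop)
  · -- positivity
    have hderiv_a_nonneg : ∀ x : ℝ, 0 ≤ x → 0 ≤ deriv a x := by
      intro x hx
      have hd : HasDerivAt a (deriv a x) x :=
        (ha_smooth.differentiable (by simp) x).hasDerivAt
      have hmono : 𝓝[>] x ≤ 𝓝[≠] x := by
        apply nhdsWithin_mono
        intro y hy
        simp only [Set.mem_compl_iff, Set.mem_singleton_iff]
        exact ne_of_gt hy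
      have ht : Filter.Tendsto (slope a x) (𝓝[>] x) (𝓝 (deriv a x)) :=
        (hasDerivAt_iff_tendsto_slope.mp hd).mono_left hmono
      refine ge_of_tendsto ht ?_
      filter_upwards [self_mem_nhdsWithin] with y hy
      rw [slope_def_field]
      apply div_nonneg
      · rw [sub_nonneg]
        exact ha_mono (Set.mem_Ici.mpr hx) (Set.mem_Ici.mpr (le_of_lt (lt_of_le_of_lt hx hy)))
          (le_of_lt hy)
      · linarith [Set.mem_Ioi.mp hy]
    have hfderiv : ∀ x : ℝ, deriv F x = a x + x * deriv a x := by
      intro x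
      have h1 : HasDerivAt F (1 * a x + x * deriv a x) x :=
        (hasDerivAt_id x).mul ((ha_smooth.differentiable (by simp) x).hasDerivAt)
      rw [h1.deriv]
      ring
    have hbound : ∀ x : ℝ, a 0 ≤ deriv F x := by
      intro x
      rw [hfderiv]
      have h1 : a 0 ≤ a x := by
        rcases le_or_gt 0 x with hx | hx
        · exact ha_mono (Set.mem_Ici.mpr le_rfl) (Set.mem_Ici.mpr hx) hx
        · rw [← ha_even x]
          exact ha_mono (Set.mem_Ici.mpr le_rfl) (Set.mem_Ici.mpr (by linarith)) (by linarith)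
      have h2 : 0 ≤ x * deriv a x := by
        rcases le_or_gt 0 x with hx | hx
        · exact mul_nonneg hx (hderiv_a_nonneg x hx)
        · have h3 : deriv (fun y : ℝ => a (-y)) x = - deriv a (-x) := deriv_comp_neg a x
          have h4 : (fun y : ℝ => a (-y)) = a := funext ha_even
          rw [h4] at h3
          rw [h3]
          have h5 : 0 ≤ deriv a (-x) := hderiv_a_nonneg (-x) (by linarith)
          nlinarith
      linarith
    intro ξ₁ ξ₂
    have hcont : Continuous (fun t : ℝ => deriv F (-ξ₂ + (ξ₁ + ξ₂) * t)) :=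
      hderiv_cont.comp (by continuity)
    have hle : a 0 ≤ q ξ₁ ξ₂ := by
      rw [hq]
      calc a 0 = ∫ _t in (0:ℝ)..1, a 0 := by simp
        _ ≤ ∫ t in (0:ℝ)..1, deriv F (-ξ₂ + (ξ₁ + ξ₂) * t) :=
            intervalIntegral.integral_mono_on zero_le_one intervalIntegrable_const
              (hcont.intervalIntegrable 0 1) (fun t _ => hbound _)
    exact lt_of_lt_of_le (ha_pos 0) hle
  · -- the divided-difference formula
    intro ξ₁ ξ₂ h
    have hne : ξ₁ ≠ -ξ₂ := by
      intro hh; exact h (by rw [hh]; ring)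
    rw [hq_eq, dslope_of_ne F hne, slope_def_field]
    have hFneg : F (-ξ₂) = -(ξ₂ * a ξ₂) := by
      show -ξ₂ * a (-ξ₂) = _
      rw [ha_even]
      ring
    rw [hFneg]
    rw [show F ξ₁ = ξ₁ * a ξ₁ from rfl]
    rw [show ξ₁ - -ξ₂ = ξ₁ + ξ₂ by ring, sub_neg_eq_add]
end

section
/- Let a : ℝ → ℝ be smooth, positive, even, non-decreasing on [0,∞), with a(2ξ) ≲ a(ξ) for ξ > 0 and |a'(ξ)| ≲ ⟨ξ⟩⁻¹·a(ξ). Define q(ξ₁,ξ₂) = ∫₀¹ (a + id·a')(-ξ₂+(ξ₁+ξ₂)t) dt (the smooth extension of (ξ₁a(ξ₁)+ξ₂a(ξ₂))/(ξ₁+ξ₂)). Then q(ξ₁,ξ₂) ≍ a(max(|ξ₁|,|ξ₂|)) uniformly in (ξ₁,ξ₂) ∈ ℝ², i.e., there are constants c, C > 0 with c·a(ξ_max) ≤ q(ξ₁,ξ₂) ≤ C·a(ξ_max) where ξ_max = max(|ξ₁|,|ξ₂|). -/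
section aux

variable {a : ℝ → ℝ}

lemma deriv_odd_of_even (hdiff : Differentiable ℝ a) (ha_even : ∀ ξ, a (-ξ) = a ξ) (x : ℝ) :
    deriv a (-x) = - deriv a x := by
  have h : (fun x => a (-x)) = a := funext ha_even
  have := deriv_comp_neg (f := a) (x := x)
  rw [h] at this
  linarith

lemma deriv_nonneg_of_mono (hdiff : Differentiable ℝ a) (ha_mono : MonotoneOn a (Set.Ici 0))
    {x : ℝ} (hx : 0 ≤ x) : 0 ≤ deriv a x := by
  have h := (hdiff x).hasDerivAt
  rw [hasDerivAt_iff_tendsto_slope] at h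
  have h2 : Filter.Tendsto (slope a x) (nhdsWithin x (Set.Ioi x)) (nhds (deriv a x)) :=
    h.mono_left (nhdsWithin_mono x (fun y hy => ne_of_gt hy))
  refine ge_of_tendsto h2 ?_
  filter_upwards [self_mem_nhdsWithin] with y hy
  have hy' : x < y := hy
  have : a x ≤ a y := ha_mono hx (le_trans hx hy'.le) hy'.le
  have hpos : 0 < y - x := by linarith
  rw [slope_def_field]
  exact div_nonneg (by linarith) hpos.le

lemma mul_deriv_nonneg (hdiff : Differentiable ℝ a) (ha_even : ∀ ξ, a (-ξ) = a ξ)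
    (ha_mono : MonotoneOn a (Set.Ici 0)) (s : ℝ) : 0 ≤ s * deriv a s := by
  rcases le_or_gt 0 s with hs | hs
  · exact mul_nonneg hs (deriv_nonneg_of_mono hdiff ha_mono hs)
  · have h1 : 0 ≤ deriv a (-s) := deriv_nonneg_of_mono hdiff ha_mono (by linarith)
    have h2 : deriv a (-s) = - deriv a s := deriv_odd_of_even hdiff ha_even s
    nlinarith

end aux

/-- `q(ξ₁,ξ₂) ≍ a(max(|ξ₁|,|ξ₂|))`, where `q` is the smooth extension of
`(ξ₁a(ξ₁)+ξ₂a(ξ₂))/(ξ₁+ξ₂)` and `a` is smooth, positive, even, non-decreasing on `[0,∞)`,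
doubling, with `|a'(ξ)| ≲ ⟨ξ⟩⁻¹ a(ξ)`. -/
theorem stmt3 (a : ℝ → ℝ) (C₁ C₂ : ℝ) (ha_smooth : ContDiff ℝ (⊤ : ℕ∞) a) (ha_pos : ∀ ξ, 0 < a ξ)
    (ha_even : ∀ ξ, a (-ξ) = a ξ) (ha_mono : MonotoneOn a (Set.Ici 0))
    (ha_doub : ∀ ξ : ℝ, 0 < ξ → a (2 * ξ) ≤ C₁ * a ξ)
    (ha_der : ∀ ξ : ℝ, |deriv a ξ| ≤ C₂ / Real.sqrt (1 + ξ ^ 2) * a ξ) :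
    let q : ℝ → ℝ → ℝ := fun ξ₁ ξ₂ =>
      ∫ t in (0:ℝ)..1,
        (a (-ξ₂ + (ξ₁ + ξ₂) * t) + (-ξ₂ + (ξ₁ + ξ₂) * t) * deriv a (-ξ₂ + (ξ₁ + ξ₂) * t))
    ∃ c > (0:ℝ), ∃ C > (0:ℝ), ∀ ξ₁ ξ₂ : ℝ,
      c * a (max |ξ₁| |ξ₂|) ≤ q ξ₁ ξ₂ ∧ q ξ₁ ξ₂ ≤ C * a (max |ξ₁| |ξ₂|) := by
  intro q
  have hdiff : Differentiable ℝ a := ha_smooth.differentiable (by simp)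
  have hdc : Continuous (deriv a) := ha_smooth.continuous_deriv (by simp)
  -- a(|x|) = a(x)
  have habs : ∀ x : ℝ, a |x| = a x := by
    intro x
    rcases le_or_gt 0 x with h | h
    · rw [abs_of_nonneg h]
    · rw [abs_of_neg h, ha_even]
  have amono' : ∀ x y : ℝ, |x| ≤ |y| → a x ≤ a y := by
    intro x y h
    rw [← habs x, ← habs y]
    exact ha_mono (abs_nonneg x) (abs_nonneg y) h
  -- C₂ ≥ 0
  have hC₂ : 0 ≤ C₂ := by
    have h := ha_der 0
    have h0 : Real.sqrt (1 + (0:ℝ)^2) = 1 := by norm_num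
    rw [h0] at h
    nlinarith [abs_nonneg (deriv a 0), ha_pos 0]
  -- C₁ ≥ 1
  have hC₁ : 1 ≤ C₁ := by
    have h := ha_doub 1 one_pos
    norm_num at h
    have h2 : a 1 ≤ a 2 := amono' 1 2 (by norm_num)
    nlinarith [ha_pos 1]
  refine ⟨1 / (4 * C₁), by positivity, 1 + C₂, by linarith, fun ξ₁ ξ₂ => ?_⟩
  set m := max |ξ₁| |ξ₂| with hm
  have hm0 : 0 ≤ m := le_trans (abs_nonneg ξ₁) (le_max_left _ _)
  set s : ℝ → ℝ := fun t => -ξ₂ + (ξ₁ + ξ₂) * t with hs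
  set g : ℝ → ℝ := fun t => a (s t) + s t * deriv a (s t) with hg
  have hsc : Continuous s := by fun_prop
  have hgc : Continuous g := by
    apply Continuous.add (ha_smooth.continuous.comp hsc)
    exact hsc.mul (hdc.comp hsc)
  have hgint : ∀ u v : ℝ, IntervalIntegrable g MeasureTheory.volume u v :=
    fun u v => hgc.intervalIntegrable u v
  have hq : q ξ₁ ξ₂ = ∫ t in (0:ℝ)..1, g t := rfl
  -- |s t| ≤ m on [0,1]
  have hsle : ∀ t ∈ Set.Icc (0:ℝ) 1, |s t| ≤ m := by
    intro t ht
    have h1 : |ξ₁| ≤ m := le_max_left _ _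
    have h2 : |ξ₂| ≤ m := le_max_right _ _
    have : s t = (1 - t) * (-ξ₂) + t * ξ₁ := by simp only [hs]; ring
    rw [this]
    calc |(1 - t) * (-ξ₂) + t * ξ₁| ≤ |(1 - t) * (-ξ₂)| + |t * ξ₁| := abs_add_le _ _
      _ = (1 - t) * |ξ₂| + t * |ξ₁| := by
          rw [abs_mul, abs_mul, abs_neg, abs_of_nonneg (by linarith [ht.2] : (0:ℝ) ≤ 1 - t),
            abs_of_nonneg ht.1]
      _ ≤ (1 - t) * m + t * m := by
          nlinarith [ht.1, ht.2, h1, h2, abs_nonneg ξ₁, abs_nonneg ξ₂]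
      _ = m := by ring
  -- pointwise bounds
  have hgpos : ∀ t : ℝ, 0 ≤ g t := fun t =>
    add_nonneg (ha_pos _).le (mul_deriv_nonneg hdiff ha_even ha_mono _)
  have hub : q ξ₁ ξ₂ ≤ (1 + C₂) * a m := by
    rw [hq]
    have h := intervalIntegral.integral_mono_on (by norm_num : (0:ℝ) ≤ 1) (hgint 0 1)
      (intervalIntegrable_const (c := (1 + C₂) * a m)) ?_
    · simpa using h
    · intro t ht
      have hstm : |s t| ≤ m := hsle t ht
      have h1 : a (s t) ≤ a m := amono' _ _ (by rwa [abs_of_nonneg hm0])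
      have hd := ha_der (s t)
      have hsq : |s t| ≤ Real.sqrt (1 + (s t) ^ 2) := by
        rw [← Real.sqrt_sq_eq_abs]
        exact Real.sqrt_le_sqrt (by nlinarith)
      have hsqpos : 0 < Real.sqrt (1 + (s t) ^ 2) := Real.sqrt_pos.mpr (by positivity)
      have h2 : s t * deriv a (s t) ≤ C₂ * a m := by
        have e1 : s t * deriv a (s t) ≤ |s t| * |deriv a (s t)| := by
          rw [← abs_mul]; exact le_abs_self _
        have e2 : |s t| * |deriv a (s t)| ≤ |s t| * (C₂ / Real.sqrt (1 + (s t) ^ 2) * a (s t)) :=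
          mul_le_mul_of_nonneg_left hd (abs_nonneg _)
        have e3 : |s t| * (C₂ / Real.sqrt (1 + (s t) ^ 2) * a (s t)) ≤ C₂ * a (s t) := by
          rw [div_mul_eq_mul_div, mul_div_assoc']
          rw [div_le_iff₀ hsqpos]
          have hA := (ha_pos (s t)).le
          nlinarith [mul_le_mul_of_nonneg_left hsq (mul_nonneg hC₂ hA)]
        have e4 : C₂ * a (s t) ≤ C₂ * a m := mul_le_mul_of_nonneg_left h1 hC₂
        linarith
      show g t ≤ (1 + C₂) * a m
      have hgval : g t = a (s t) + s t * deriv a (s t) := rfl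
      rw [hgval]
      nlinarith
  refine ⟨?_, hub⟩
  -- lower bound
  rcases eq_or_lt_of_le hm0 with hm0' | hmpos
  · -- m = 0 : ξ₁ = ξ₂ = 0
    have h1 : ξ₁ = 0 := by
      have : |ξ₁| ≤ 0 := hm0' ▸ le_max_left _ _
      simpa [abs_nonpos_iff] using this
    have h2 : ξ₂ = 0 := by
      have : |ξ₂| ≤ 0 := hm0' ▸ le_max_right _ _
      simpa [abs_nonpos_iff] using this
    have hs0 : ∀ t, s t = 0 := by intro t; simp [hs, h1, h2]
    have hqval : q ξ₁ ξ₂ = a 0 + 0 * deriv a 0 := by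
      rw [hq]
      have : g = fun _ : ℝ => a 0 + 0 * deriv a 0 := by
        funext t; simp only [hg, hs0]
      rw [this, intervalIntegral.integral_const]
      simp
    rw [hqval, ← hm0']
    have hc1 : 1 / (4 * C₁) ≤ 1 := by
      rw [div_le_one (by linarith)]
      linarith
    nlinarith [ha_pos (0:ℝ)]
  · -- m > 0
    -- choose the subinterval
    obtain ⟨u, v, hu0, huv, hv1, hsge⟩ :
        ∃ u v : ℝ, 0 ≤ u ∧ v = u + 1/4 ∧ v ≤ 1 ∧
          ∀ t ∈ Set.Icc u v, m / 2 ≤ |s t| := by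
      rcases le_total |ξ₂| |ξ₁| with hcase | hcase
      · -- m = |ξ₁|, use [3/4, 1]
        have hmeq : m = |ξ₁| := max_eq_left hcase
        refine ⟨3/4, 1, by norm_num, by norm_num, le_refl 1, fun t ht => ?_⟩
        have hrw : s t = ξ₁ - (1 - t) * (ξ₁ + ξ₂) := by simp only [hs]; ring
        have h1 : |(1 - t) * (ξ₁ + ξ₂)| ≤ (1/4) * (2 * m) := by
          rw [abs_mul]
          have ht1 : |1 - t| ≤ 1/4 := by
            rw [abs_le]; constructor <;> [linarith [ht.2]; linarith [ht.1]]
          have ht2 : |ξ₁ + ξ₂| ≤ 2 * m := by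
            calc |ξ₁ + ξ₂| ≤ |ξ₁| + |ξ₂| := abs_add_le _ _
              _ ≤ m + m := add_le_add (le_max_left _ _) (le_max_right _ _)
              _ = 2 * m := by ring
          exact mul_le_mul ht1 ht2 (abs_nonneg _) (by norm_num)
        have h2 : |ξ₁| - |(1 - t) * (ξ₁ + ξ₂)| ≤ |s t| := by
          rw [hrw]
          linarith [abs_sub_abs_le_abs_sub ξ₁ ((1 - t) * (ξ₁ + ξ₂))]
        rw [hmeq] at h1 ⊢
        linarith
      · -- m = |ξ₂|, use [0, 1/4]
        have hmeq : m = |ξ₂| := max_eq_right hcase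
        refine ⟨0, 1/4, le_refl 0, by norm_num, by norm_num, fun t ht => ?_⟩
        have hrw : s t = -ξ₂ + t * (ξ₁ + ξ₂) := by simp only [hs]; ring
        have h1 : |t * (ξ₁ + ξ₂)| ≤ (1/4) * (2 * m) := by
          rw [abs_mul]
          have ht1 : |t| ≤ 1/4 := by
            rw [abs_le]; constructor <;> [linarith [ht.1]; linarith [ht.2]]
          have ht2 : |ξ₁ + ξ₂| ≤ 2 * m := by
            calc |ξ₁ + ξ₂| ≤ |ξ₁| + |ξ₂| := abs_add_le _ _
              _ ≤ m + m := add_le_add (le_max_left _ _) (le_max_right _ _)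
              _ = 2 * m := by ring
          exact mul_le_mul ht1 ht2 (abs_nonneg _) (by norm_num)
        have h2 : |ξ₂| - |t * (ξ₁ + ξ₂)| ≤ |s t| := by
          rw [hrw]
          have h3 := abs_sub_abs_le_abs_sub (-ξ₂) (-(t * (ξ₁ + ξ₂)))
          rw [abs_neg ξ₂, abs_neg (t * (ξ₁ + ξ₂)), sub_neg_eq_add] at h3
          linarith
        rw [hmeq] at h1 ⊢
        linarith
    -- split integral
    have hsplit : q ξ₁ ξ₂ = (∫ t in (0:ℝ)..u, g t) + (∫ t in u..v, g t) + ∫ t in v..1, g t := by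
      rw [hq, ← intervalIntegral.integral_add_adjacent_intervals (hgint 0 v) (hgint v 1),
        ← intervalIntegral.integral_add_adjacent_intervals (hgint 0 u) (hgint u v)]
    have hI1 : 0 ≤ ∫ t in (0:ℝ)..u, g t :=
      intervalIntegral.integral_nonneg hu0 (fun t _ => hgpos t)
    have hI3 : 0 ≤ ∫ t in v..1, g t :=
      intervalIntegral.integral_nonneg hv1 (fun t _ => hgpos t)
    have hI2 : (1/4) * a (m/2) ≤ ∫ t in u..v, g t := by
      have huv' : u ≤ v := by linarith
      have h := intervalIntegral.integral_mono_on huv'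
        (intervalIntegrable_const (c := a (m/2))) (hgint u v) ?_
      · rw [intervalIntegral.integral_const] at h
        have : v - u = 1/4 := by linarith
        rw [this] at h
        simpa [smul_eq_mul] using h
      · intro t ht
        have h1 : a (m/2) ≤ a (s t) := by
          apply amono'
          rw [abs_of_nonneg (by linarith : (0:ℝ) ≤ m/2)]
          exact hsge t ht
        have h2 : 0 ≤ s t * deriv a (s t) := mul_deriv_nonneg hdiff ha_even ha_mono _
        show a (m/2) ≤ g t
        have hgval : g t = a (s t) + s t * deriv a (s t) := rfl
        rw [hgval]
        exact le_add_of_le_of_nonneg h1 h2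
    have hdoub : a m ≤ C₁ * a (m/2) := by
      have := ha_doub (m/2) (by linarith)
      have hmeq : 2 * (m/2) = m := by ring
      rwa [hmeq] at this
    have : 1 / (4 * C₁) * a m ≤ (1/4) * a (m/2) := by
      rw [div_mul_eq_mul_div, one_mul, div_le_iff₀ (by linarith : (0:ℝ) < 4 * C₁)]
      nlinarith [ha_pos (m/2)]
    linarith
end

section
/- Let N₁ ≫ N₂ ≥ 1 be dyadic, φ₁, φ₂ ∈ L²(𝕋) with Fourier support of φⱼ in the annulus {N_j/2 ≤ |n| ≤ 2N_j} (or |n| ≤ 2 if N_j = 1), and 0 < δ ≲ N₁⁻¹. Then ‖e^{it∂ₓ²}φ₁ · conj(e^{it∂ₓ²}φ₂)‖_{L²([0,δ];L²(𝕋))} ≲ N₁^{-1/2} ‖φ₁‖_{L²} ‖φ₂‖_{L²}. -/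
/-!
Expand the product in Fourier series: its `μ`-th spatial mode at time `t` is, up to a unimodular
factor, `∑ₙ c₁(μ + n) c̄₂(n) e^{-2iμnt}`, because `(μ + n)² - n² = μ² + 2μn`. Parseval in `x`
reduces the `L²_{t,x}` norm to the sum over `μ` of the time integrals of these modes. For fixed `μ`
the time frequencies `2μn` are distinct multiples of `2μ`, so on one period `π / |μ|` they are
orthogonal, and `δ ≤ N₁⁻¹ ≤ π / |μ|` because `|μ| ≤ 3N₁`. Since `|μ| ≥ N₁ / 4` by the frequency
separation, each mode contributes at most `(π / |μ|) ∑ₙ |c₁(μ + n)|² |c₂(n)|² ≲ N₁⁻¹ ∑ₙ …`, and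
summing over `μ` gives the product of the two `ℓ²` norms.
-/

open MeasureTheory

instance : Fact (0 < 2 * Real.pi) := ⟨by positivity⟩

/-- The free periodic Schrödinger evolution `e^{it∂ₓ²}φ`, written in terms of the Fourier
coefficients `c` of `φ`. -/
noncomputable def schrodingerEvol (c : ℤ → ℂ) (t : ℝ) (x : AddCircle (2 * Real.pi)) : ℂ :=
  ∑' n : ℤ, c n * Complex.exp (-Complex.I * (n : ℂ) ^ 2 * (t : ℂ)) * fourier n x

open ComplexConjugate Real Finset
open scoped Pointwise

theorem Finset.sum_sum_eq_sum_sub_sum {G M : Type*} [AddCommGroup G] [DecidableEq G]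
    [AddCommMonoid M] {S₁ : Finset G} (S₂ : Finset G) {f : G → G → M}
    (hf : ∀ n₁ ∉ S₁, ∀ n₂, f n₁ n₂ = 0) :
    ∑ n₁ ∈ S₁, ∑ n₂ ∈ S₂, f n₁ n₂ = ∑ μ ∈ S₁ - S₂, ∑ n₂ ∈ S₂, f (μ + n₂) n₂ := by
  rw [sum_comm, sum_comm (s := S₁ - S₂)]
  refine sum_congr rfl fun n₂ hn₂ => ?_
  exact (sum_subset (fun n₁ hn₁ => mem_map.2 ⟨n₁ - n₂, sub_mem_sub hn₁ hn₂, sub_add_cancel _ _⟩)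
    fun n₁ _ hn₁ => hf n₁ hn₁ n₂).trans (sum_map (S₁ - S₂) (addRightEmbedding n₂) (f · n₂))

theorem integral_exp_mul_I_period {ω : ℝ} (hω : ω ≠ 0) (m : ℤ) :
    ∫ t in (0:ℝ)..2 * π / |ω|, Complex.exp (ω * m * t * Complex.I)
      = if m = 0 then ((2 * π / |ω| : ℝ) : ℂ) else 0 := by
  split_ifs with hm
  · simp [hm]
  have hω' : (ω : ℂ) ≠ 0 := by exact_mod_cast hω
  have hc : (ω : ℂ) * m * Complex.I ≠ 0 := by simp [hω, hm, Complex.I_ne_zero]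
  have hperiod : ∃ j : ℤ, (ω : ℂ) * m * Complex.I * ((2 * π / |ω| : ℝ) : ℂ)
      = j * (2 * π * Complex.I) := by
    rcases abs_cases ω with ⟨habs, -⟩ | ⟨habs, -⟩
    · exact ⟨m, by rw [habs]; push_cast; field_simp⟩
    · exact ⟨-m, by rw [habs]; push_cast; field_simp⟩
  obtain ⟨j, hj⟩ := hperiod
  have hlin : ∀ t : ℝ, Complex.exp (ω * m * t * Complex.I)
      = Complex.exp ((ω * m * Complex.I) * t) := fun t => by ring_nf
  simp_rw [hlin, integral_exp_mul_complex hc, hj, Complex.exp_int_mul_two_pi_mul_I]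
  simp

theorem integral_norm_sq_sum_exp_mul_I (s : Finset ℤ) (b : ℤ → ℂ) {ω : ℝ} (hω : ω ≠ 0) :
    ∫ t in (0:ℝ)..2 * π / |ω|, ‖∑ n ∈ s, b n * Complex.exp (ω * n * t * Complex.I)‖ ^ 2
      = 2 * π / |ω| * ∑ n ∈ s, ‖b n‖ ^ 2 := by
  have hexpand : ∀ t : ℝ, ((‖∑ n ∈ s, b n * Complex.exp (ω * n * t * Complex.I)‖ ^ 2 : ℝ) : ℂ)
      = ∑ n ∈ s, ∑ n' ∈ s, b n * conj (b n') * Complex.exp (ω * (n - n' : ℤ) * t * Complex.I) := by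
    intro t
    rw [Complex.ofReal_pow, ← Complex.mul_conj', map_sum, sum_mul_sum]
    refine sum_congr rfl fun n _ => sum_congr rfl fun n' _ => ?_
    rw [map_mul, ← Complex.exp_conj, mul_mul_mul_comm, ← Complex.exp_add]
    simp only [map_mul, Complex.conj_ofReal, map_intCast, Complex.conj_I]
    push_cast
    ring_nf
  have hcont : ∀ n n' : ℤ, Continuous fun t : ℝ =>
      b n * conj (b n') * Complex.exp (ω * (n - n' : ℤ) * t * Complex.I) := by
    intro n n'; fun_prop
  apply Complex.ofReal_injective
  rw [← intervalIntegral.integral_ofReal]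
  simp_rw [hexpand]
  rw [intervalIntegral.integral_finsetSum fun n _ =>
    (continuous_finsetSum _ fun n' _ => hcont n n').intervalIntegrable _ _]
  simp_rw [intervalIntegral.integral_finsetSum fun n' _ => (hcont _ n').intervalIntegrable _ _,
    intervalIntegral.integral_const_mul, integral_exp_mul_I_period hω, sub_eq_zero]
  push_cast
  rw [mul_sum]
  refine sum_congr rfl fun n hn => ?_
  rw [sum_eq_single_of_mem n hn fun n' _ hn' => by rw [if_neg hn'.symm, mul_zero], if_pos rfl,
    Complex.mul_conj']
  ring

theorem integral_norm_sq_sum_fourier {T : ℝ} [hT : Fact (0 < T)] (s : Finset ℤ) (a : ℤ → ℂ) :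
    ∫ x : AddCircle T, ‖∑ n ∈ s, a n * fourier n x‖ ^ 2 = T * ∑ n ∈ s, ‖a n‖ ^ 2 := by
  have hT₀ := hT.out
  have hperiod : 2 * π / |2 * π / T| = T := by
    rw [abs_of_pos (by positivity)]
    field_simp
  have key := integral_norm_sq_sum_exp_mul_I s a (ω := 2 * π / T) (by positivity)
  rw [hperiod] at key
  rw [← key, ← AddCircle.intervalIntegral_preimage T 0, zero_add]
  congr with t
  congr 2
  refine sum_congr rfl fun n _ => ?_
  rw [fourier_coe_apply]
  push_cast
  ring_nf

/-- The `μ`-th spatial Fourier coefficient of `e^{it∂ₓ²}φ₁ · conj (e^{it∂ₓ²}φ₂)` at time `t`,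
with the unimodular factor `e^{-iμ²t}` removed; the summand pairs `n₁ = μ + n` with `n₂ = n`. -/
noncomputable def bilinearMode (c₁ c₂ : ℤ → ℂ) (S : Finset ℤ) (μ : ℤ) (t : ℝ) : ℂ :=
  ∑ n ∈ S, c₁ (μ + n) * conj (c₂ n) * Complex.exp ((-2 * μ : ℝ) * n * t * Complex.I)

theorem continuous_bilinearMode (c₁ c₂ : ℤ → ℂ) (S : Finset ℤ) (μ : ℤ) :
    Continuous (bilinearMode c₁ c₂ S μ) := by
  unfold bilinearMode
  fun_prop

theorem schrodingerEvol_eq_sum {c : ℤ → ℂ} {S : Finset ℤ} (hc : ∀ n ∉ S, c n = 0) (t : ℝ)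
    (x : AddCircle (2 * π)) :
    schrodingerEvol c t x
      = ∑ n ∈ S, c n * Complex.exp (-Complex.I * (n : ℂ) ^ 2 * (t : ℂ)) * fourier n x :=
  tsum_eq_sum fun n hn => by simp [hc n hn]

theorem schrodingerEvol_mul_conj_eq_sum {c₁ c₂ : ℤ → ℂ} {S₁ S₂ : Finset ℤ}
    (hc₁ : ∀ n ∉ S₁, c₁ n = 0) (hc₂ : ∀ n ∉ S₂, c₂ n = 0) (t : ℝ) (x : AddCircle (2 * π)) :
    schrodingerEvol c₁ t x * conj (schrodingerEvol c₂ t x)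
      = ∑ μ ∈ S₁ - S₂, Complex.exp ((-μ ^ 2 * t : ℝ) * Complex.I) * bilinearMode c₁ c₂ S₂ μ t
          * fourier μ x := by
  rw [schrodingerEvol_eq_sum hc₁, schrodingerEvol_eq_sum hc₂, map_sum, sum_mul_sum,
    sum_sum_eq_sum_sub_sum S₂ fun n₁ hn₁ n₂ => by simp [hc₁ n₁ hn₁]]
  refine sum_congr rfl fun μ _ => ?_
  rw [bilinearMode, mul_sum, sum_mul]
  refine sum_congr rfl fun n _ => ?_
  have hphase : Complex.exp (-Complex.I * ((μ + n : ℤ) : ℂ) ^ 2 * t)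
      * conj (Complex.exp (-Complex.I * (n : ℂ) ^ 2 * t))
      = Complex.exp ((-μ ^ 2 * t : ℝ) * Complex.I)
        * Complex.exp ((-2 * μ : ℝ) * n * t * Complex.I) := by
    rw [← Complex.exp_conj, ← Complex.exp_add, ← Complex.exp_add]
    simp only [map_mul, map_neg, map_pow, Complex.conj_I, Complex.conj_ofReal, map_intCast]
    push_cast
    ring_nf
  have hfourier : fourier (μ + n) x * conj (fourier n x) = fourier μ x := by
    rw [← fourier_neg, ← fourier_add, add_neg_cancel_right]
  rw [map_mul, map_mul, ← hfourier]
  linear_combination c₁ (μ + n) * conj (c₂ n) * fourier (μ + n) x * conj (fourier n x) * hphase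

theorem integral_norm_sq_bilinearMode_le (c₁ c₂ : ℤ → ℂ) (S : Finset ℤ) {μ : ℤ} (hμ : μ ≠ 0)
    {δ : ℝ} (hδ : 0 ≤ δ) (hδμ : δ * |(μ : ℝ)| ≤ π) :
    ∫ t in (0:ℝ)..δ, ‖bilinearMode c₁ c₂ S μ t‖ ^ 2
      ≤ π / |(μ : ℝ)| * ∑ n ∈ S, ‖c₁ (μ + n) * conj (c₂ n)‖ ^ 2 := by
  have hμ' : 0 < |(μ : ℝ)| := abs_pos.2 (Int.cast_ne_zero.2 hμ)
  have hω : (-2 * μ : ℝ) ≠ 0 := by simpa using hμ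
  have hperiod : 2 * π / |(-2 * μ : ℝ)| = π / |(μ : ℝ)| := by
    rw [abs_mul]
    norm_num
    field_simp
  calc ∫ t in (0:ℝ)..δ, ‖bilinearMode c₁ c₂ S μ t‖ ^ 2
      ≤ ∫ t in (0:ℝ)..π / |(μ : ℝ)|, ‖bilinearMode c₁ c₂ S μ t‖ ^ 2 :=
        intervalIntegral.integral_mono_interval le_rfl hδ ((le_div_iff₀ hμ').2 hδμ)
          (Filter.Eventually.of_forall fun t => by positivity)
          (((continuous_bilinearMode c₁ c₂ S μ).norm.pow 2).intervalIntegrable _ _)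
    _ = π / |(μ : ℝ)| * ∑ n ∈ S, ‖c₁ (μ + n) * conj (c₂ n)‖ ^ 2 := by
        rw [← hperiod]
        exact integral_norm_sq_sum_exp_mul_I S _ hω

theorem integral_integral_norm_sq_schrodingerEvol_mul_conj_le {c₁ c₂ : ℤ → ℂ}
    (h₁ : (Function.support c₁).Finite) (h₂ : (Function.support c₂).Finite) {K δ : ℝ}
    (hK : 0 < K) (hδ : 0 ≤ δ)
    (hfreq : ∀ n₁ n₂ : ℤ, c₁ n₁ ≠ 0 → c₂ n₂ ≠ 0 →
      K ≤ |(n₁ - n₂ : ℝ)| ∧ δ * |(n₁ - n₂ : ℝ)| ≤ π) :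
    ∫ t in (0:ℝ)..δ, ∫ x : AddCircle (2 * π),
        ‖schrodingerEvol c₁ t x * conj (schrodingerEvol c₂ t x)‖ ^ 2
      ≤ 2 * π ^ 2 / K * (∑' n, ‖c₁ n‖ ^ 2) * (∑' n, ‖c₂ n‖ ^ 2) := by
  classical
  set S₁ := h₁.toFinset
  set S₂ := h₂.toFinset
  have hc₁ : ∀ n ∉ S₁, c₁ n = 0 := by simp [S₁]
  have hc₂ : ∀ n ∉ S₂, c₂ n = 0 := by simp [S₂]
  have hspatial : ∀ t, ∫ x : AddCircle (2 * π),
      ‖schrodingerEvol c₁ t x * conj (schrodingerEvol c₂ t x)‖ ^ 2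
        = 2 * π * ∑ μ ∈ S₁ - S₂, ‖bilinearMode c₁ c₂ S₂ μ t‖ ^ 2 := by
    intro t
    simp_rw [schrodingerEvol_mul_conj_eq_sum hc₁ hc₂ t, integral_norm_sq_sum_fourier, norm_mul,
      Complex.norm_exp_ofReal_mul_I, one_mul]
  have htime : ∀ μ ∈ S₁ - S₂, ∫ t in (0:ℝ)..δ, ‖bilinearMode c₁ c₂ S₂ μ t‖ ^ 2
      ≤ π / K * ∑ n ∈ S₂, ‖c₁ (μ + n) * conj (c₂ n)‖ ^ 2 := by
    intro μ hμ
    obtain ⟨n₁, hn₁, n₂, hn₂, rfl⟩ := mem_sub.1 hμ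
    obtain ⟨hKμ, hδμ⟩ := hfreq n₁ n₂ (by simpa [S₁] using hn₁) (by simpa [S₂] using hn₂)
    have hμ : n₁ - n₂ ≠ 0 := fun h => by
      rw [← Int.cast_sub, h, Int.cast_zero, abs_zero] at hKμ
      linarith
    refine (integral_norm_sq_bilinearMode_le c₁ c₂ S₂ hμ hδ (by push_cast; exact hδμ)).trans ?_
    push_cast
    gcongr
  have hmass : ∑ μ ∈ S₁ - S₂, ∑ n ∈ S₂, ‖c₁ (μ + n) * conj (c₂ n)‖ ^ 2
      = (∑' n, ‖c₁ n‖ ^ 2) * (∑' n, ‖c₂ n‖ ^ 2) := by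
    rw [tsum_eq_sum (s := S₁) fun n hn => by simp [hc₁ n hn],
      tsum_eq_sum (s := S₂) fun n hn => by simp [hc₂ n hn], sum_mul_sum,
      sum_sum_eq_sum_sub_sum S₂ (f := fun n₁ n₂ => ‖c₁ n₁‖ ^ 2 * ‖c₂ n₂‖ ^ 2)
        fun n₁ hn₁ n₂ => by simp [hc₁ n₁ hn₁]]
    simp only [norm_mul, RCLike.norm_conj, mul_pow]
  have hcont : ∀ μ, Continuous fun t => ‖bilinearMode c₁ c₂ S₂ μ t‖ ^ 2 := fun μ =>
    (continuous_bilinearMode c₁ c₂ S₂ μ).norm.pow 2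
  calc _ = ∫ t in (0:ℝ)..δ, 2 * π * ∑ μ ∈ S₁ - S₂, ‖bilinearMode c₁ c₂ S₂ μ t‖ ^ 2 :=
        intervalIntegral.integral_congr fun t _ => hspatial t
    _ = 2 * π * ∑ μ ∈ S₁ - S₂, ∫ t in (0:ℝ)..δ, ‖bilinearMode c₁ c₂ S₂ μ t‖ ^ 2 := by
        rw [intervalIntegral.integral_const_mul, intervalIntegral.integral_finsetSum fun μ _ =>
          (hcont μ).intervalIntegrable _ _]
    _ ≤ 2 * π * ∑ μ ∈ S₁ - S₂, π / K * ∑ n ∈ S₂, ‖c₁ (μ + n) * conj (c₂ n)‖ ^ 2 := by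
        gcongr with μ hμ
        exact htime μ hμ
    _ = 2 * π ^ 2 / K * (∑' n, ‖c₁ n‖ ^ 2) * (∑' n, ‖c₂ n‖ ^ 2) := by
        rw [← mul_sum, hmass]
        ring

theorem Function.support_finite_of_abs_le {M : Type*} [Zero M] {c : ℤ → M} {R : ℝ}
    (h : ∀ n, c n ≠ 0 → |(n : ℝ)| ≤ R) : (Function.support c).Finite :=
  (Set.finite_Icc (-⌈R⌉) ⌈R⌉).subset fun n hn => by
    have hn' : |n| ≤ ⌈R⌉ := by exact_mod_cast (h n hn).trans (Int.le_ceil R)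
    exact abs_le.1 hn'

/-- Bilinear Strichartz for separated dyadic frequencies `N₁ ≫ N₂`:
`‖e^{it∂ₓ²}φ₁ conj(e^{it∂ₓ²}φ₂)‖_{L²([0,δ];L²(𝕋))} ≲ N₁^{-1/2}‖φ₁‖_{L²}‖φ₂‖_{L²}` for
`0 < δ ≲ N₁⁻¹` (squared form). -/
theorem stmt13 :
    ∃ C₀ > (0:ℝ), ∃ C > (0:ℝ), ∀ k₁ k₂ : ℕ,
      let N₁ : ℝ := 2 ^ k₁
      let N₂ : ℝ := 2 ^ k₂
      C₀ * N₂ ≤ N₁ →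
      ∀ c₁ c₂ : ℤ → ℂ, Summable (fun n => ‖c₁ n‖) → Summable (fun n => ‖c₂ n‖) →
      (∀ n : ℤ, c₁ n ≠ 0 → N₁ / 2 ≤ |(n : ℝ)| ∧ |(n : ℝ)| ≤ 2 * N₁) →
      (∀ n : ℤ, c₂ n ≠ 0 → |(n : ℝ)| ≤ 2 * N₂ ∧ (N₂ ≤ 1 ∨ N₂ / 2 ≤ |(n : ℝ)|)) →
      ∀ δ : ℝ, 0 < δ → δ ≤ N₁⁻¹ →
      (∫ t in (0:ℝ)..δ, ∫ x : AddCircle (2 * Real.pi),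
          ‖schrodingerEvol c₁ t x * (starRingEnd ℂ) (schrodingerEvol c₂ t x)‖ ^ 2)
        ≤ C * N₁⁻¹ * (∑' n : ℤ, ‖c₁ n‖ ^ 2) * (∑' n : ℤ, ‖c₂ n‖ ^ 2) := by
  refine ⟨8, by norm_num, 8 * π ^ 2, by positivity, ?_⟩
  intro k₁ k₂ N₁ N₂ hsep c₁ c₂ _ _ hc₁ hc₂ δ hδ hδN
  have hN₁ : 0 < N₁ := by positivity
  -- `C₀ = 8` gives `|n₂| ≤ 2N₂ ≤ N₁ / 4`, hence `N₁ / 4 ≤ |n₁ - n₂| ≤ 3N₁`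
  have hfreq : ∀ n₁ n₂ : ℤ, c₁ n₁ ≠ 0 → c₂ n₂ ≠ 0 →
      N₁ / 4 ≤ |(n₁ - n₂ : ℝ)| ∧ δ * |(n₁ - n₂ : ℝ)| ≤ π := by
    intro n₁ n₂ h₁ h₂
    obtain ⟨hlow₁, hup₁⟩ := hc₁ n₁ h₁
    have hup₂ := (hc₂ n₂ h₂).1
    refine ⟨by linarith [abs_sub_abs_le_abs_sub (n₁ : ℝ) n₂], ?_⟩
    calc δ * |(n₁ - n₂ : ℝ)| ≤ N₁⁻¹ * (3 * N₁) := by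
          gcongr
          exact (abs_sub _ _).trans (by linarith)
      _ = 3 := by field_simp
      _ ≤ π := pi_gt_three.le
  calc _ ≤ 2 * π ^ 2 / (N₁ / 4) * (∑' n, ‖c₁ n‖ ^ 2) * (∑' n, ‖c₂ n‖ ^ 2) :=
        integral_integral_norm_sq_schrodingerEvol_mul_conj_le
          (Function.support_finite_of_abs_le fun n hn => (hc₁ n hn).2)
          (Function.support_finite_of_abs_le fun n hn => (hc₂ n hn).1) (by positivity) hδ.le hfreq
    _ = 8 * π ^ 2 * N₁⁻¹ * (∑' n, ‖c₁ n‖ ^ 2) * (∑' n, ‖c₂ n‖ ^ 2) := by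
        field_simp
        ring
end

section
/- Let E₀ᵃ(f) = Σ_n a(n)|f̂(n)|² and E₁ᵃ(f) = Σ_{ξ₁+ξ₂+ξ₃+ξ₄=0} b₄ᵃ(ξ₁,ξ₂,ξ₃,ξ₄) sgn(ξ₁₂) f̂(ξ₁) conj(f̂)(-ξ₂) f̂(ξ₃) conj(f̂)(-ξ₄), where |b₄ᵃ(ξ₁,ξ₂,ξ₃,ξ₄)| ≲ a(N₁*)/N₁* on dyadic blocks with N₁* the largest of the four dyadic frequencies (and the largest two comparable). Then |E₁ᵃ(f)| ≲ ‖f‖_{L²}² · E₀ᵃ(f) for all f ∈ L²(𝕋) with E₀ᵃ(f) < ∞. -/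
/-!
Write the summand at `p` through the four coefficient indices `n₁ = p.1`, `n₂ = -p.2.1`,
`n₃ = p.2.2`, `n₄ = p.1 + p.2.1 + p.2.2`; they satisfy `n₁ + n₃ = n₂ + n₄`, and `|nᵢ|` are the
frequency sizes, so `N = max(1, maxᵢ |nᵢ|)` is `N₁*`. On this resonant set the largest `|nᵢ|` is
at most the sum of the other three, so two of the brackets `⟨nᵢ⟩ = max(1, |nᵢ|)` are at least
`N / 3`, and by doubling `a(N) ≲ a(⟨nᵢ⟩)` for both. AM–GM pairs each of these two large
frequencies with one of the other two, bounding `a(N) ∏ |c(nᵢ)|` by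
`a(⟨n_u⟩) |c(n_u)|² |c(n_w)|² + a(⟨n_v⟩) |c(n_v)|² |c(n_t)|²`. With `n_u` and `n_w` fixed, the
remaining free frequency ranges over `|n| ≤ N ≤ 3⟨n_u⟩`, and the factor `1 / N ≤ 1 / ⟨n_u⟩` of the
multiplier pays for this sum, leaving `‖c‖₂² · Σ a(⟨n⟩) |c(n)|²`. Finally
`a(⟨n⟩) ≤ (a 1 / a 0) a(n)`.
-/

open Finset ENNReal

namespace ModifiedEnergy

def bracket (n : ℤ) : ℕ := max 1 n.natAbs

def topBracket (v : Fin 4 → ℤ) : ℕ :=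
  max 1 (max (v 0).natAbs (max (v 1).natAbs (max (v 2).natAbs (v 3).natAbs)))

lemma one_le_bracket (n : ℤ) : 1 ≤ bracket n := le_max_left _ _

lemma one_le_topBracket (v : Fin 4 → ℤ) : 1 ≤ topBracket v := le_max_left _ _

lemma bracket_le_topBracket (v : Fin 4 → ℤ) (i : Fin 4) : bracket (v i) ≤ topBracket v := by
  fin_cases i <;> simp [topBracket, bracket] <;> omega

lemma natAbs_le_topBracket (v : Fin 4 → ℤ) (i : Fin 4) : (v i).natAbs ≤ topBracket v :=
  (le_max_right _ _).trans (bracket_le_topBracket v i)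

lemma tsum_ite_natAbs_le_three_mul {K : ℕ} (hK : 1 ≤ K) :
    ∑' z : ℤ, (if z.natAbs ≤ 3 * K then (K : ℝ≥0∞)⁻¹ else 0) ≤ 7 := by
  rw [tsum_eq_sum (s := Icc (-(3 * K : ℤ)) (3 * K)) fun z hz => if_neg (by
    simp only [mem_Icc, not_and_or, not_le] at hz; omega)]
  rw [sum_congr rfl fun z hz => if_pos (by simp only [mem_Icc] at hz; omega), sum_const,
    Int.card_Icc, nsmul_eq_mul, show (3 * K + 1 - -(3 * K : ℤ)).toNat = 6 * K + 1 by omega]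
  have hK0 : (K : ℝ≥0∞) ≠ 0 := Nat.cast_ne_zero.2 (by omega)
  calc ((6 * K + 1 : ℕ) : ℝ≥0∞) * (K : ℝ≥0∞)⁻¹ ≤ (7 * K : ℕ) * (K : ℝ≥0∞)⁻¹ := by
        gcongr; omega
    _ = 7 := by push_cast; rw [mul_assoc, ENNReal.mul_inv_cancel hK0 (natCast_ne_top K), mul_one]

lemma tsum_mul_mul_ite_le (f g : ℤ → ℝ≥0∞) :
    ∑' q : ℤ × ℤ × ℤ, f q.1 * g q.2.1 *
        (if q.2.2.natAbs ≤ 3 * bracket q.1 then (bracket q.1 : ℝ≥0∞)⁻¹ else 0) ≤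
      7 * (∑' n, f n) * ∑' n, g n := by
  calc _ = ∑' (x) (y), f x * g y *
        ∑' z : ℤ, (if z.natAbs ≤ 3 * bracket x then (bracket x : ℝ≥0∞)⁻¹ else 0) := by
        simp only [ENNReal.tsum_prod', ENNReal.tsum_mul_left]
    _ ≤ ∑' (x) (y), f x * g y * 7 := by
        gcongr with x y; exact tsum_ite_natAbs_le_three_mul (one_le_bracket x)
    _ = 7 * (∑' n, f n) * ∑' n, g n := by
        simp only [ENNReal.tsum_mul_right, ENNReal.tsum_mul_left]; ring

/-- The largest `|vᵢ|` is at most the sum of the other three, hence at most three times the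
second largest. -/
lemma exists_perm_topBracket_le_three_mul (v : Fin 4 → ℤ) (hv : v 0 + v 2 = v 1 + v 3) :
    ∃ σ : Equiv.Perm (Fin 4),
      topBracket v ≤ 3 * bracket (v (σ 0)) ∧ topBracket v ≤ 3 * bracket (v (σ 1)) := by
  have : (topBracket v ≤ 3 * bracket (v 0) ∧ topBracket v ≤ 3 * bracket (v 1)) ∨
      (topBracket v ≤ 3 * bracket (v 0) ∧ topBracket v ≤ 3 * bracket (v 2)) ∨
      (topBracket v ≤ 3 * bracket (v 0) ∧ topBracket v ≤ 3 * bracket (v 3)) ∨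
      (topBracket v ≤ 3 * bracket (v 2) ∧ topBracket v ≤ 3 * bracket (v 1)) ∨
      (topBracket v ≤ 3 * bracket (v 3) ∧ topBracket v ≤ 3 * bracket (v 1)) ∨
      (topBracket v ≤ 3 * bracket (v 2) ∧ topBracket v ≤ 3 * bracket (v 3)) := by
    simp only [topBracket, bracket]; omega
  rcases this with h | h | h | h | h | h
  · exact ⟨1, h⟩
  · exact ⟨Equiv.swap 1 2, h⟩
  · exact ⟨Equiv.swap 1 3, h⟩
  · exact ⟨Equiv.swap 0 2, h⟩
  · exact ⟨Equiv.swap 0 3, h⟩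
  · exact ⟨Equiv.swap 0 2 * Equiv.swap 1 3, h⟩

def resonant (p : ℤ × ℤ × ℤ) : Fin 4 → ℤ := ![p.1, -p.2.1, p.2.2, p.1 + p.2.1 + p.2.2]

lemma resonant_add (p : ℤ × ℤ × ℤ) :
    resonant p 0 + resonant p 2 = resonant p 1 + resonant p 3 := by
  simp only [resonant, Fin.isValue, Matrix.cons_val_zero, Matrix.cons_val, Matrix.cons_val_one]
  ring

lemma injective_resonant_three {u v w : Fin 4} (huv : u ≠ v) (huw : u ≠ w) (hvw : v ≠ w) :
    Function.Injective fun p => (resonant p u, resonant p v, resonant p w) := by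
  rintro ⟨x, y, z⟩ ⟨x', y', z'⟩ h
  fin_cases u <;> fin_cases v <;> fin_cases w <;> simp_all [resonant] <;> omega

noncomputable def pairTerm (a : ℝ → ℝ) (D : ℤ → ℝ) (v : Fin 4 → ℤ) (u w : Fin 4) : ℝ :=
  if topBracket v ≤ 3 * bracket (v u) then
    a (bracket (v u)) * D (v u) ^ 2 * D (v w) ^ 2 / topBracket v
  else 0

section
variable {a : ℝ → ℝ} {D : ℤ → ℝ}

lemma pairTerm_nonneg (ha : ∀ ξ, 0 ≤ a ξ) (v : Fin 4 → ℤ) (u w : Fin 4) :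
    0 ≤ pairTerm a D v u w := by
  unfold pairTerm
  split_ifs
  · have := ha (bracket (v u)); positivity
  · rfl

lemma tsum_ofReal_pairTerm_resonant_le (ha : ∀ ξ, 0 ≤ a ξ) {u w : Fin 4} (huw : u ≠ w) :
    ∑' p, ENNReal.ofReal (pairTerm a D (resonant p) u w) ≤
      7 * (∑' n, ENNReal.ofReal (a (bracket n) * D n ^ 2)) * ∑' n, ENNReal.ofReal (D n ^ 2) := by
  obtain ⟨t, hut, hwt⟩ : ∃ t, u ≠ t ∧ w ≠ t := by revert u w; decide
  set F : ℤ × ℤ × ℤ → ℝ≥0∞ := fun q =>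
    ENNReal.ofReal (a (bracket q.1) * D q.1 ^ 2) * ENNReal.ofReal (D q.2.1 ^ 2) *
      (if q.2.2.natAbs ≤ 3 * bracket q.1 then (bracket q.1 : ℝ≥0∞)⁻¹ else 0)
  have hF : ∀ p, ENNReal.ofReal (pairTerm a D (resonant p) u w) ≤
      F (resonant p u, resonant p w, resonant p t) := by
    intro p
    simp only [pairTerm, F]
    split_ifs with hu ht
    · rw [ENNReal.ofReal_div_of_pos (Nat.cast_pos.2 (one_le_topBracket _)),
        ENNReal.ofReal_mul (by have := ha (bracket (resonant p u)); positivity),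
        ENNReal.ofReal_natCast, div_eq_mul_inv]
      gcongr
      exact bracket_le_topBracket _ _
    · exact absurd ((natAbs_le_topBracket _ t).trans hu) ht
    all_goals simp
  calc _ ≤ ∑' p, F (resonant p u, resonant p w, resonant p t) := ENNReal.tsum_le_tsum hF
    _ ≤ ∑' q, F q := ENNReal.tsum_comp_le_tsum_of_injective (injective_resonant_three huw hut hwt) F
    _ ≤ _ := tsum_mul_mul_ite_le _ _

lemma mul_mul_le_of_le_of_le {K A B P Q : ℝ} (hK : 0 ≤ K) (hA : K ≤ A) (hB : K ≤ B) :
    K * (P * Q) ≤ (A * P ^ 2 + B * Q ^ 2) / 2 := by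
  nlinarith [mul_nonneg hK (sq_nonneg (P - Q)), mul_le_mul_of_nonneg_right hA (sq_nonneg P),
    mul_le_mul_of_nonneg_right hB (sq_nonneg Q)]

lemma apply_le_sq_mul_of_le_three_mul (ha_mono : MonotoneOn a (Set.Ici 0)) {C : ℝ} (hC : 0 ≤ C)
    (ha_doub : ∀ ξ : ℝ, 0 < ξ → a (2 * ξ) ≤ C * a ξ) {M N : ℝ} (hM : 0 < M) (hN : 0 ≤ N)
    (hNM : N ≤ 3 * M) : a N ≤ C ^ 2 * a M :=
  calc a N ≤ a (2 * (2 * M)) := ha_mono hN (by simp only [Set.mem_Ici]; positivity) (by linarith)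
    _ ≤ C * a (2 * M) := ha_doub _ (by positivity)
    _ ≤ C * (C * a M) := by gcongr; exact ha_doub M hM
    _ = C ^ 2 * a M := by ring

lemma apply_topBracket_div_mul_prod_le (ha : ∀ ξ, 0 ≤ a ξ) (ha_mono : MonotoneOn a (Set.Ici 0))
    {C : ℝ} (hC : 0 ≤ C) (ha_doub : ∀ ξ : ℝ, 0 < ξ → a (2 * ξ) ≤ C * a ξ) {v : Fin 4 → ℤ}
    (hv : v 0 + v 2 = v 1 + v 3) :
    a (topBracket v) / topBracket v * ∏ i, D (v i) ≤
      C ^ 2 / 2 * ∑ x ∈ univ.offDiag, pairTerm a D v x.1 x.2 := by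
  obtain ⟨σ, h0, h1⟩ := exists_perm_topBracket_le_three_mul v hv
  have hN : (0 : ℝ) < topBracket v := Nat.cast_pos.2 (one_le_topBracket v)
  have hcomp : ∀ k, topBracket v ≤ 3 * bracket (v k) →
      a (topBracket v) ≤ C ^ 2 * a (bracket (v k)) := fun k hk =>
    apply_le_sq_mul_of_le_three_mul ha_mono hC ha_doub (Nat.cast_pos.2 (one_le_bracket _))
      hN.le (by exact_mod_cast hk)
  calc a (topBracket v) / topBracket v * ∏ i, D (v i)
      = a (topBracket v) * ((D (v (σ 0)) * D (v (σ 2))) * (D (v (σ 1)) * D (v (σ 3)))) /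
          topBracket v := by
        rw [← Equiv.prod_comp σ, Fin.prod_univ_four]; ring
    _ ≤ (C ^ 2 * a (bracket (v (σ 0))) * (D (v (σ 0)) * D (v (σ 2))) ^ 2 +
          C ^ 2 * a (bracket (v (σ 1))) * (D (v (σ 1)) * D (v (σ 3))) ^ 2) / 2 / topBracket v := by
        gcongr
        exact mul_mul_le_of_le_of_le (ha _) (hcomp _ h0) (hcomp _ h1)
    _ = C ^ 2 / 2 * (pairTerm a D v (σ 0) (σ 2) + pairTerm a D v (σ 1) (σ 3)) := by
        simp only [pairTerm, if_pos h0, if_pos h1]; ring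
    _ ≤ C ^ 2 / 2 * ∑ x ∈ univ.offDiag, pairTerm a D v x.1 x.2 := by
        gcongr
        refine add_le_sum (f := fun x : Fin 4 × Fin 4 => pairTerm a D v x.1 x.2)
          (i := (σ 0, σ 2)) (j := (σ 1, σ 3))
          (fun x _ => pairTerm_nonneg ha v x.1 x.2) ?_ ?_ ?_
        all_goals simp

lemma tsum_ofReal_quartic_le (ha : ∀ ξ, 0 ≤ a ξ) (ha_mono : MonotoneOn a (Set.Ici 0))
    {C : ℝ} (hC : 0 ≤ C) (ha_doub : ∀ ξ : ℝ, 0 < ξ → a (2 * ξ) ≤ C * a ξ) :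
    ∑' p, ENNReal.ofReal (a (topBracket (resonant p)) / topBracket (resonant p) *
        ∏ i, D (resonant p i)) ≤
      ENNReal.ofReal (42 * C ^ 2) * (∑' n, ENNReal.ofReal (a (bracket n) * D n ^ 2)) *
        ∑' n, ENNReal.ofReal (D n ^ 2) := by
  set W := ∑' n, ENNReal.ofReal (a (bracket n) * D n ^ 2)
  set X := ∑' n, ENNReal.ofReal (D n ^ 2)
  calc _ ≤ ∑' p, ENNReal.ofReal (C ^ 2 / 2) *
        ∑ x ∈ univ.offDiag, ENNReal.ofReal (pairTerm a D (resonant p) x.1 x.2) := by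
        gcongr with p
        rw [← ENNReal.ofReal_sum_of_nonneg fun x _ => pairTerm_nonneg ha _ _ _,
          ← ENNReal.ofReal_mul (by positivity)]
        exact ENNReal.ofReal_le_ofReal
          (apply_topBracket_div_mul_prod_le ha ha_mono hC ha_doub (resonant_add p))
    _ = ENNReal.ofReal (C ^ 2 / 2) *
        ∑ x ∈ univ.offDiag, ∑' p, ENNReal.ofReal (pairTerm a D (resonant p) x.1 x.2) := by
        rw [ENNReal.tsum_mul_left, Summable.tsum_finsetSum fun _ _ => ENNReal.summable]
    _ ≤ ENNReal.ofReal (C ^ 2 / 2) * ∑ x ∈ (univ : Finset (Fin 4)).offDiag, 7 * W * X := by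
        gcongr with x hx
        exact tsum_ofReal_pairTerm_resonant_le ha (mem_offDiag.1 hx).2.2
    _ = ENNReal.ofReal (42 * C ^ 2) * W * X := by
        -- `42 = 12 · 7 / 2`: twelve ordered pairs, each costing `7 W X`
        rw [sum_const, show (univ : Finset (Fin 4)).offDiag.card = 12 by decide, nsmul_eq_mul,
          show 42 * C ^ 2 = 84 * (C ^ 2 / 2) by ring, ENNReal.ofReal_mul (by norm_num),
          ENNReal.ofReal_ofNat]
        ring

lemma apply_bracket_le (ha_pos : ∀ ξ, 0 < a ξ) (ha_even : ∀ ξ, a (-ξ) = a ξ)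
    (ha_mono : MonotoneOn a (Set.Ici 0)) (n : ℤ) : a (bracket n) ≤ a 1 / a 0 * a n := by
  have h01 : a 0 ≤ a 1 := ha_mono Set.self_mem_Ici (Set.mem_Ici.2 zero_le_one) zero_le_one
  rcases eq_or_ne n 0 with rfl | hn
  · simp [bracket, (ha_pos 0).ne']
  · have habs : a |(n : ℝ)| = a n := by
      rcases abs_cases (n : ℝ) with ⟨h, _⟩ | ⟨h, _⟩ <;> simp only [h, ha_even]
    have hbr : (bracket n : ℝ) = |(n : ℝ)| := by
      rw [bracket, max_eq_right (Int.natAbs_pos.2 hn), Nat.cast_natAbs, Int.cast_abs]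
    rw [hbr, habs]
    exact le_mul_of_one_le_left (ha_pos _).le ((one_le_div (ha_pos 0)).2 h01)

lemma tsum_ofReal_apply_bracket_le (ha_pos : ∀ ξ, 0 < a ξ) (ha_even : ∀ ξ, a (-ξ) = a ξ)
    (ha_mono : MonotoneOn a (Set.Ici 0)) (hs : Summable fun n : ℤ => a n * D n ^ 2) :
    ∑' n, ENNReal.ofReal (a (bracket n) * D n ^ 2) ≤
      ENNReal.ofReal (a 1 / a 0 * ∑' n : ℤ, a n * D n ^ 2) := by
  rw [ENNReal.ofReal_mul (div_nonneg (ha_pos 1).le (ha_pos 0).le),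
    ENNReal.ofReal_tsum_of_nonneg (fun n => mul_nonneg (ha_pos _).le (sq_nonneg _)) hs,
    ← ENNReal.tsum_mul_left]
  gcongr with n
  rw [← ENNReal.ofReal_mul (div_nonneg (ha_pos 1).le (ha_pos 0).le), ← mul_assoc]
  exact ENNReal.ofReal_le_ofReal
    (mul_le_mul_of_nonneg_right (apply_bracket_le ha_pos ha_even ha_mono n) (sq_nonneg _))

lemma tsum_ofReal_quartic_le_of_summable (ha_pos : ∀ ξ, 0 < a ξ) (ha_even : ∀ ξ, a (-ξ) = a ξ)
    (ha_mono : MonotoneOn a (Set.Ici 0)) {C : ℝ} (hC : 0 ≤ C)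
    (ha_doub : ∀ ξ : ℝ, 0 < ξ → a (2 * ξ) ≤ C * a ξ) (hD : Summable fun n => D n ^ 2)
    (haD : Summable fun n : ℤ => a n * D n ^ 2) :
    ∑' p, ENNReal.ofReal (a (topBracket (resonant p)) / topBracket (resonant p) *
        ∏ i, D (resonant p i)) ≤
      ENNReal.ofReal (42 * C ^ 2 * (a 1 / a 0 * ∑' n : ℤ, a n * D n ^ 2) * ∑' n, D n ^ 2) := by
  have ha : ∀ ξ, 0 ≤ a ξ := fun ξ => (ha_pos ξ).le
  have hW : 0 ≤ a 1 / a 0 * ∑' n : ℤ, a n * D n ^ 2 :=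
    mul_nonneg (div_nonneg (ha 1) (ha 0)) (tsum_nonneg fun n => mul_nonneg (ha n) (sq_nonneg _))
  rw [ENNReal.ofReal_mul (by positivity), ENNReal.ofReal_mul (by positivity),
    ENNReal.ofReal_tsum_of_nonneg (fun n => sq_nonneg _) hD]
  refine (tsum_ofReal_quartic_le ha ha_mono hC ha_doub).trans ?_
  gcongr
  exact tsum_ofReal_apply_bracket_le ha_pos ha_even ha_mono haD

end

lemma cast_topBracket_resonant (p : ℤ × ℤ × ℤ) :
    (topBracket (resonant p) : ℝ) = max 1 (max |(p.1 : ℝ)| (max |(p.2.1 : ℝ)|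
      (max |(p.2.2 : ℝ)| |-((p.1 : ℝ) + p.2.1 + p.2.2)|))) := by
  rw [abs_neg]
  simp [topBracket, resonant, Nat.cast_natAbs]

lemma norm_mul_sign_mul_le {b : ℂ} {B : ℝ} (hb : ‖b‖ ≤ B) (s : ℝ) (z₁ z₂ z₃ z₄ : ℂ) :
    ‖b * (Real.sign s : ℂ) * z₁ * (starRingEnd ℂ) z₂ * z₃ * (starRingEnd ℂ) z₄‖ ≤
      B * (‖z₁‖ * ‖z₂‖ * ‖z₃‖ * ‖z₄‖) := by
  have hs : ‖(Real.sign s : ℂ)‖ ≤ 1 := by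
    rcases Real.sign_apply_eq s with h | h | h <;> simp [h]
  simp only [norm_mul, RCLike.norm_conj]
  calc ‖b‖ * ‖(Real.sign s : ℂ)‖ * ‖z₁‖ * ‖z₂‖ * ‖z₃‖ * ‖z₄‖
      ≤ B * 1 * ‖z₁‖ * ‖z₂‖ * ‖z₃‖ * ‖z₄‖ := by gcongr; exact (norm_nonneg _).trans hb
    _ = B * (‖z₁‖ * ‖z₂‖ * ‖z₃‖ * ‖z₄‖) := by ring

lemma norm_tsum_le_of_norm_le_of_tsum_ofReal_le {α E : Type*} [NormedAddCommGroup E]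
    {T : α → E} {Q : α → ℝ} {C B : ℝ} (hC : 0 ≤ C) (hB : 0 ≤ B) (hT : ∀ p, ‖T p‖ ≤ C * Q p)
    (hQ : ∑' p, ENNReal.ofReal (Q p) ≤ ENNReal.ofReal B) : ‖∑' p, T p‖ ≤ C * B := by
  have hsum : ∑' p, ENNReal.ofReal ‖T p‖ ≤ ENNReal.ofReal (C * B) :=
    calc ∑' p, ENNReal.ofReal ‖T p‖ ≤ ∑' p, ENNReal.ofReal C * ENNReal.ofReal (Q p) := by
          gcongr with p
          rw [← ENNReal.ofReal_mul hC]
          exact ENNReal.ofReal_le_ofReal (hT p)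
      _ ≤ ENNReal.ofReal (C * B) := by
          rw [ENNReal.tsum_mul_left, ENNReal.ofReal_mul hC]; gcongr
  have hsummable : Summable fun p => ‖T p‖ := by
    simpa using ENNReal.summable_toReal (hsum.trans_lt ENNReal.ofReal_lt_top).ne
  refine (norm_tsum_le_tsum_norm hsummable).trans ?_
  rw [← ENNReal.ofReal_le_ofReal_iff (by positivity),
    ENNReal.ofReal_tsum_of_nonneg (fun _ => norm_nonneg _) hsummable]
  exact hsum

end ModifiedEnergy

open ModifiedEnergy

/-- Pointwise-in-time bound for the modified-energy correction term:
`|E₁ᵃ(f)| ≲ ‖f‖_{L²}² E₀ᵃ(f)`, where `E₀ᵃ(f) = Σₙ a(n)|f̂(n)|²` and `E₁ᵃ` is the quadrilinear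
functional on `Γ₄ = {ξ₁+ξ₂+ξ₃+ξ₄=0}` with multiplier `b₄ᵃ·sgn(ξ₁₂)` satisfying
`|b₄ᵃ| ≲ a(N₁*)/N₁*` (with `N₁*` the largest frequency size; on `Γ₄` the largest two are
automatically comparable). Here `f` is described by its Fourier coefficients `c`. -/
theorem stmt15 (a : ℝ → ℝ) (ha_pos : ∀ ξ, 0 < a ξ) (ha_even : ∀ ξ, a (-ξ) = a ξ)
    (ha_mono : MonotoneOn a (Set.Ici 0)) (C₁ : ℝ) (ha_doub : ∀ ξ : ℝ, 0 < ξ → a (2 * ξ) ≤ C₁ * a ξ)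
    (b : ℝ → ℝ → ℝ → ℝ → ℂ) (C₂ : ℝ)
    (hb : ∀ ξ₁ ξ₂ ξ₃ ξ₄ : ℝ, ξ₁ + ξ₂ + ξ₃ + ξ₄ = 0 →
      ‖b ξ₁ ξ₂ ξ₃ ξ₄‖ ≤
        C₂ * a (max 1 (max |ξ₁| (max |ξ₂| (max |ξ₃| |ξ₄|)))) /
          max 1 (max |ξ₁| (max |ξ₂| (max |ξ₃| |ξ₄|)))) :
    ∃ C > (0:ℝ), ∀ c : ℤ → ℂ,
      Summable (fun n : ℤ => ‖c n‖ ^ 2) → Summable (fun n : ℤ => a n * ‖c n‖ ^ 2) →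
      ‖∑' p : ℤ × ℤ × ℤ,
          b p.1 p.2.1 p.2.2 (-(p.1 + p.2.1 + p.2.2)) *
            ((Real.sign ((p.1 : ℝ) + (p.2.1 : ℝ)) : ℝ) : ℂ) *
            c p.1 * (starRingEnd ℂ) (c (-p.2.1)) * c p.2.2 *
            (starRingEnd ℂ) (c (p.1 + p.2.1 + p.2.2))‖
        ≤ C * (∑' n : ℤ, ‖c n‖ ^ 2) * (∑' n : ℤ, a n * ‖c n‖ ^ 2) := by
  have ha : ∀ ξ, 0 ≤ a ξ := fun ξ => (ha_pos ξ).le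
  have hC₁ : 0 ≤ C₁ :=
    nonneg_of_mul_nonneg_left ((ha _).trans (ha_doub 1 one_pos)) (ha_pos 1)
  have hC₂ : 0 ≤ C₂ := by
    have : 0 ≤ C₂ * a 1 := by simpa using (norm_nonneg _).trans (hb 0 0 0 0 (by norm_num))
    exact nonneg_of_mul_nonneg_left this (ha_pos 1)
  have hρ : 0 ≤ a 1 / a 0 := div_nonneg (ha 1) (ha 0)
  refine ⟨42 * C₂ * C₁ ^ 2 * (a 1 / a 0) + 1, by positivity, fun c hc hac => ?_⟩
  have hX : 0 ≤ ∑' n : ℤ, ‖c n‖ ^ 2 := tsum_nonneg fun n => by positivity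
  have hY : 0 ≤ ∑' n : ℤ, a n * ‖c n‖ ^ 2 := tsum_nonneg fun n => mul_nonneg (ha n) (by positivity)
  have hsum := tsum_ofReal_quartic_le_of_summable (D := fun n => ‖c n‖)
    ha_pos ha_even ha_mono hC₁ ha_doub hc hac
  refine (norm_tsum_le_of_norm_le_of_tsum_ofReal_le hC₂ (by positivity) (fun p => ?_) hsum).trans
    (by nlinarith [mul_nonneg hX hY])
  have hterm := norm_mul_sign_mul_le (hb p.1 p.2.1 p.2.2 (-((p.1 : ℝ) + p.2.1 + p.2.2)) (by ring))
    ((p.1 : ℝ) + p.2.1) (c p.1) (c (-p.2.1)) (c p.2.2) (c (p.1 + p.2.1 + p.2.2))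
  rw [← cast_topBracket_resonant] at hterm
  refine hterm.trans_eq ?_
  simp only [resonant, Fin.prod_univ_four, Fin.isValue, Matrix.cons_val_zero,
    Matrix.cons_val_one, Matrix.cons_val]
  ring
end
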